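/- arXiv:math/0312075 — 2 statements merged into one kernel-verified Lean document; each statement's English description precedes it below -/
import Mathlib

section
/- Let I ⊆ ℝ (or an open domain in ℂ) be a set of values of τ with τ ≠ 0, let a ∈ ℂ, and let A, B, C, D, y be differentiable complex-valued functions of τ on I with y(τ)² = −A(τ)B(τ). Define the 2×2 matrix functions 𝒰(λ,τ) = τ(−i σ₃ − (a i/(2τλ)) σ₃ − (1/λ)[[0,C],[D,0]] + (i/(2λ²))[[y, A],[B, −y]]) and 𝒱(λ,τ) = −iλ σ₃ + (a i/(2τ)) σ₃ − [[0,C],[D,0]] − (i/(2λ))[[y, A],[B, −y]]. Then the zero-curvature (Frobenius compatibility) equation ∂_τ 𝒰(λ,τ) − ∂_λ 𝒱(λ,τ) + 𝒰(λ,τ)𝒱(λ,τ) − 𝒱(λ,τ)𝒰(λ,τ) = 0 holds for all λ ≠ 0 and all τ ∈ I if and only if the functions satisfy the isomonodromy deformation system: A' = 4C y, B' = −4D y, (τC)' = 2a i C − 2τA, (τD)' = −2a i D + 2τB, and y' = 2(A D − B C) on I. -/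
open Complex Matrix

/-- The Pauli matrix σ₃. -/
noncomputable def pauli3 : Matrix (Fin 2) (Fin 2) ℂ := !![1, 0; 0, -1]

/-- The matrix 𝒰(λ,τ) of the linear system associated with the degenerate
third Painlevé equation. -/
noncomputable def Usys (a : ℂ) (A B C D y : ℂ → ℂ) (lam τ : ℂ) :
    Matrix (Fin 2) (Fin 2) ℂ :=
  τ • ((-Complex.I) • pauli3 - (a * Complex.I / (2 * τ * lam)) • pauli3
      - (1 / lam) • !![0, C τ; D τ, 0]
      + (Complex.I / (2 * lam ^ 2)) • !![y τ, A τ; B τ, -y τ])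

/-- The matrix 𝒱(λ,τ) of the linear system associated with the degenerate
third Painlevé equation. -/
noncomputable def Vsys (a : ℂ) (A B C D y : ℂ → ℂ) (lam τ : ℂ) :
    Matrix (Fin 2) (Fin 2) ℂ :=
  (-(Complex.I * lam)) • pauli3 + (a * Complex.I / (2 * τ)) • pauli3
    - !![0, C τ; D τ, 0] - (Complex.I / (2 * lam)) • !![y τ, A τ; B τ, -y τ]

set_option linter.unreachableTactic false
set_option linter.unusedTactic false
set_option linter.unusedVariables false

lemma Usys_eq (a : ℂ) (A B C D y : ℂ → ℂ) (lam τ : ℂ) :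
    Usys a A B C D y lam τ =
    !![τ * (-Complex.I - a * Complex.I / (2 * τ * lam) + Complex.I * y τ / (2 * lam ^ 2)),
       τ * (-(C τ) / lam + Complex.I * A τ / (2 * lam ^ 2));
       τ * (-(D τ) / lam + Complex.I * B τ / (2 * lam ^ 2)),
       τ * (Complex.I + a * Complex.I / (2 * τ * lam) - Complex.I * y τ / (2 * lam ^ 2))] := by
  ext i j
  fin_cases i <;> fin_cases j <;> simp [Usys, pauli3] <;> ring_nf <;>
    first | rfl | exact Or.inl trivial

lemma Vsys_eq (a : ℂ) (A B C D y : ℂ → ℂ) (lam τ : ℂ) :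
    Vsys a A B C D y lam τ =
    !![-(Complex.I * lam) + a * Complex.I / (2 * τ) - Complex.I * y τ / (2 * lam),
       -(C τ) - Complex.I * A τ / (2 * lam);
       -(D τ) - Complex.I * B τ / (2 * lam),
       Complex.I * lam - a * Complex.I / (2 * τ) + Complex.I * y τ / (2 * lam)] := by
  ext i j
  fin_cases i <;> fin_cases j <;> simp [Vsys, pauli3] <;> ring_nf <;>
    first | rfl | exact Or.inl trivial

section derivs
variable {a lam τ : ℂ} {A B C D y : ℂ → ℂ} {dA dB dC dD dy dtC dtD dtA dtB : ℂ}

lemma hU00 (hτ : τ ≠ 0) (hlam : lam ≠ 0) (hy : HasDerivAt y dy τ) :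
    HasDerivAt (fun t => Usys a A B C D y lam t 0 0)
      (-Complex.I + Complex.I * (y τ + τ * dy) / (2 * lam ^ 2)) τ := by
  have hfun : (fun t => Usys a A B C D y lam t 0 0)
      = fun t => t * (-Complex.I - a * Complex.I / (2 * t * lam)
          + Complex.I * y t / (2 * lam ^ 2)) := by
    funext t; rw [Usys_eq]; simp
  rw [hfun]
  have hden : (2 * τ * lam) ≠ 0 := by
    simp [hτ, hlam]
  have h2 : HasDerivAt (fun t : ℂ => 2 * t * lam) (2 * 1 * lam) τ :=
    ((hasDerivAt_id τ).const_mul 2).mul_const lam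
  have hq : HasDerivAt (fun t : ℂ => a * Complex.I / (2 * t * lam))
      ((0 * (2 * τ * lam) - a * Complex.I * (2 * 1 * lam)) / (2 * τ * lam) ^ 2) τ :=
    (hasDerivAt_const τ (a * Complex.I)).div h2 hden
  have hg := ((hasDerivAt_const τ (-Complex.I)).sub hq).add
      ((hy.const_mul Complex.I).div_const (2 * lam ^ 2))
  have hf := (hasDerivAt_id τ).mul hg
  refine hf.congr_deriv ?_
  symm
  simp only [Pi.add_apply, Pi.sub_apply, id_eq, zero_mul, zero_sub, mul_one, one_mul, neg_neg, neg_div]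
  field_simp
  try rw [eq_div_iff (by simp [hτ, hlam])]
  try rw [eq_div_iff (by simp [hlam])]
  ring

lemma hU01 (hlam : lam ≠ 0)
    (htC : HasDerivAt (fun t => t * C t) dtC τ)
    (htA : HasDerivAt (fun t => t * A t) dtA τ) :
    HasDerivAt (fun t => Usys a A B C D y lam t 0 1)
      (-(dtC / lam) + Complex.I * dtA / (2 * lam ^ 2)) τ := by
  have hfun : (fun t => Usys a A B C D y lam t 0 1)
      = fun t => -(t * C t / lam) + Complex.I * (t * A t) / (2 * lam ^ 2) := by
    funext t; rw [Usys_eq]; simp; ring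
  rw [hfun]
  exact ((htC.div_const lam).neg).add ((htA.const_mul Complex.I).div_const (2 * lam ^ 2))

lemma hU10 (hlam : lam ≠ 0)
    (htD : HasDerivAt (fun t => t * D t) dtD τ)
    (htB : HasDerivAt (fun t => t * B t) dtB τ) :
    HasDerivAt (fun t => Usys a A B C D y lam t 1 0)
      (-(dtD / lam) + Complex.I * dtB / (2 * lam ^ 2)) τ := by
  have hfun : (fun t => Usys a A B C D y lam t 1 0)
      = fun t => -(t * D t / lam) + Complex.I * (t * B t) / (2 * lam ^ 2) := by
    funext t; rw [Usys_eq]; simp; ring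
  rw [hfun]
  exact ((htD.div_const lam).neg).add ((htB.const_mul Complex.I).div_const (2 * lam ^ 2))

lemma hU11 (hτ : τ ≠ 0) (hlam : lam ≠ 0) (hy : HasDerivAt y dy τ) :
    HasDerivAt (fun t => Usys a A B C D y lam t 1 1)
      (Complex.I - Complex.I * (y τ + τ * dy) / (2 * lam ^ 2)) τ := by
  have hfun : (fun t => Usys a A B C D y lam t 1 1)
      = fun t => t * (Complex.I + a * Complex.I / (2 * t * lam)
          - Complex.I * y t / (2 * lam ^ 2)) := by
    funext t; rw [Usys_eq]; simp
  rw [hfun]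
  have hden : (2 * τ * lam) ≠ 0 := by simp [hτ, hlam]
  have h2 : HasDerivAt (fun t : ℂ => 2 * t * lam) (2 * 1 * lam) τ :=
    ((hasDerivAt_id τ).const_mul 2).mul_const lam
  have hq : HasDerivAt (fun t : ℂ => a * Complex.I / (2 * t * lam))
      ((0 * (2 * τ * lam) - a * Complex.I * (2 * 1 * lam)) / (2 * τ * lam) ^ 2) τ :=
    (hasDerivAt_const τ (a * Complex.I)).div h2 hden
  have hg := ((hasDerivAt_const τ Complex.I).add hq).sub
      ((hy.const_mul Complex.I).div_const (2 * lam ^ 2))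
  have hf := (hasDerivAt_id τ).mul hg
  refine hf.congr_deriv ?_
  symm
  simp only [Pi.add_apply, Pi.sub_apply, id_eq, zero_mul, zero_sub, mul_one, one_mul, neg_neg, neg_div]
  field_simp
  try rw [eq_div_iff (by simp [hτ, hlam])]
  try rw [eq_div_iff (by simp [hlam])]
  ring

lemma hV00 (hlam : lam ≠ 0) :
    HasDerivAt (fun l => Vsys a A B C D y l τ 0 0)
      (-Complex.I + Complex.I * y τ / (2 * lam ^ 2)) lam := by
  have hfun : (fun l => Vsys a A B C D y l τ 0 0)
      = fun l => -(Complex.I * l) + a * Complex.I / (2 * τ)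
          - Complex.I * y τ / (2 * l) := by
    funext l; rw [Vsys_eq]; simp
  rw [hfun]
  have h2 : HasDerivAt (fun l : ℂ => 2 * l) (2 * 1) lam := (hasDerivAt_id lam).const_mul 2
  have hden : (2 * lam) ≠ 0 := by simp [hlam]
  have hq : HasDerivAt (fun l : ℂ => Complex.I * y τ / (2 * l))
      ((0 * (2 * lam) - Complex.I * y τ * (2 * 1)) / (2 * lam) ^ 2) lam :=
    (hasDerivAt_const lam (Complex.I * y τ)).div h2 hden
  have hf := ((((hasDerivAt_id lam).const_mul Complex.I).neg).add_const
      (a * Complex.I / (2 * τ))).sub hq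
  refine hf.congr_deriv ?_
  symm
  simp only [id_eq, zero_mul, zero_sub, mul_one, one_mul, neg_neg, neg_div]
  field_simp
  try rw [eq_div_iff (by simp [hτ, hlam])]
  try rw [eq_div_iff (by simp [hlam])]
  ring

lemma hV01 (hlam : lam ≠ 0) :
    HasDerivAt (fun l => Vsys a A B C D y l τ 0 1)
      (Complex.I * A τ / (2 * lam ^ 2)) lam := by
  have hfun : (fun l => Vsys a A B C D y l τ 0 1)
      = fun l => -(C τ) - Complex.I * A τ / (2 * l) := by
    funext l; rw [Vsys_eq]; simp
  rw [hfun]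
  have h2 : HasDerivAt (fun l : ℂ => 2 * l) (2 * 1) lam := (hasDerivAt_id lam).const_mul 2
  have hden : (2 * lam) ≠ 0 := by simp [hlam]
  have hq : HasDerivAt (fun l : ℂ => Complex.I * A τ / (2 * l))
      ((0 * (2 * lam) - Complex.I * A τ * (2 * 1)) / (2 * lam) ^ 2) lam :=
    (hasDerivAt_const lam (Complex.I * A τ)).div h2 hden
  have hf := (hasDerivAt_const lam (-(C τ))).sub hq
  refine hf.congr_deriv ?_
  symm
  simp only [id_eq, zero_mul, zero_sub, mul_one, one_mul, neg_neg, neg_div]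
  field_simp
  try rw [eq_div_iff (by simp [hτ, hlam])]
  try rw [eq_div_iff (by simp [hlam])]

lemma hV10 (hlam : lam ≠ 0) :
    HasDerivAt (fun l => Vsys a A B C D y l τ 1 0)
      (Complex.I * B τ / (2 * lam ^ 2)) lam := by
  have hfun : (fun l => Vsys a A B C D y l τ 1 0)
      = fun l => -(D τ) - Complex.I * B τ / (2 * l) := by
    funext l; rw [Vsys_eq]; simp
  rw [hfun]
  have h2 : HasDerivAt (fun l : ℂ => 2 * l) (2 * 1) lam := (hasDerivAt_id lam).const_mul 2
  have hden : (2 * lam) ≠ 0 := by simp [hlam]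
  have hq : HasDerivAt (fun l : ℂ => Complex.I * B τ / (2 * l))
      ((0 * (2 * lam) - Complex.I * B τ * (2 * 1)) / (2 * lam) ^ 2) lam :=
    (hasDerivAt_const lam (Complex.I * B τ)).div h2 hden
  have hf := (hasDerivAt_const lam (-(D τ))).sub hq
  refine hf.congr_deriv ?_
  symm
  simp only [id_eq, zero_mul, zero_sub, mul_one, one_mul, neg_neg, neg_div]
  field_simp
  try rw [eq_div_iff (by simp [hτ, hlam])]
  try rw [eq_div_iff (by simp [hlam])]

lemma hV11 (hlam : lam ≠ 0) :
    HasDerivAt (fun l => Vsys a A B C D y l τ 1 1)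
      (Complex.I - Complex.I * y τ / (2 * lam ^ 2)) lam := by
  have hfun : (fun l => Vsys a A B C D y l τ 1 1)
      = fun l => Complex.I * l - a * Complex.I / (2 * τ)
          + Complex.I * y τ / (2 * l) := by
    funext l; rw [Vsys_eq]; simp
  rw [hfun]
  have h2 : HasDerivAt (fun l : ℂ => 2 * l) (2 * 1) lam := (hasDerivAt_id lam).const_mul 2
  have hden : (2 * lam) ≠ 0 := by simp [hlam]
  have hq : HasDerivAt (fun l : ℂ => Complex.I * y τ / (2 * l))
      ((0 * (2 * lam) - Complex.I * y τ * (2 * 1)) / (2 * lam) ^ 2) lam :=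
    (hasDerivAt_const lam (Complex.I * y τ)).div h2 hden
  have hf := (((hasDerivAt_id lam).const_mul Complex.I).sub_const
      (a * Complex.I / (2 * τ))).add hq
  refine hf.congr_deriv ?_
  symm
  simp only [id_eq, zero_mul, zero_sub, mul_one, one_mul, neg_neg, neg_div]
  field_simp
  try rw [eq_div_iff (by simp [hτ, hlam])]
  try rw [eq_div_iff (by simp [hlam])]
  ring

end derivs

set_option maxHeartbeats 2000000 in
/-- The zero-curvature (Frobenius compatibility) equation
`∂_τ 𝒰 − ∂_λ 𝒱 + 𝒰𝒱 − 𝒱𝒰 = 0` holds for all `λ ≠ 0` and all `τ ∈ S` if and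
only if `A, B, C, D, y` satisfy the isomonodromy deformation system. -/
theorem zero_curvature_iff_isomonodromy
    (S : Set ℂ) (hS : IsOpen S) (a : ℂ) (A B C D y : ℂ → ℂ)
    (hτ : ∀ τ ∈ S, τ ≠ 0)
    (hA : ∀ τ ∈ S, DifferentiableAt ℂ A τ)
    (hB : ∀ τ ∈ S, DifferentiableAt ℂ B τ)
    (hC : ∀ τ ∈ S, DifferentiableAt ℂ C τ)
    (hD : ∀ τ ∈ S, DifferentiableAt ℂ D τ)
    (hy : ∀ τ ∈ S, DifferentiableAt ℂ y τ)
    (hy2 : ∀ τ ∈ S, (y τ) ^ 2 = -(A τ * B τ)) :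
    (∀ τ ∈ S, ∀ lam : ℂ, lam ≠ 0 → ∀ i j : Fin 2,
        deriv (fun t => Usys a A B C D y lam t i j) τ
          - deriv (fun l => Vsys a A B C D y l τ i j) lam
          + (Usys a A B C D y lam τ * Vsys a A B C D y lam τ
              - Vsys a A B C D y lam τ * Usys a A B C D y lam τ) i j = 0)
      ↔ (∀ τ ∈ S,
          HasDerivAt A (4 * C τ * y τ) τ ∧
          HasDerivAt B (-(4 * D τ * y τ)) τ ∧
          HasDerivAt (fun t => t * C t) (2 * a * Complex.I * C τ - 2 * τ * A τ) τ ∧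
          HasDerivAt (fun t => t * D t) (-(2 * a * Complex.I * D τ) + 2 * τ * B τ) τ ∧
          HasDerivAt y (2 * (A τ * D τ - B τ * C τ)) τ) := by
  constructor
  · -- forward
    intro H τ0 hτ0S
    have hτ0' : τ0 ≠ 0 := hτ τ0 hτ0S
    have hA' : HasDerivAt A (deriv A τ0) τ0 := (hA τ0 hτ0S).hasDerivAt
    have hB' : HasDerivAt B (deriv B τ0) τ0 := (hB τ0 hτ0S).hasDerivAt
    have hC' : HasDerivAt C (deriv C τ0) τ0 := (hC τ0 hτ0S).hasDerivAt
    have hD' : HasDerivAt D (deriv D τ0) τ0 := (hD τ0 hτ0S).hasDerivAt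
    have hy' : HasDerivAt y (deriv y τ0) τ0 := (hy τ0 hτ0S).hasDerivAt
    have htA := (hasDerivAt_id τ0).mul hA'
    have htB := (hasDerivAt_id τ0).mul hB'
    have htC0 := (hasDerivAt_id τ0).mul hC'
    have htD0 := (hasDerivAt_id τ0).mul hD'
    have e01a := H τ0 hτ0S 1 one_ne_zero 0 1
    have e01b := H τ0 hτ0S (-1) (by norm_num) 0 1
    have e10a := H τ0 hτ0S 1 one_ne_zero 1 0
    have e10b := H τ0 hτ0S (-1) (by norm_num) 1 0
    have e00 := H τ0 hτ0S 1 one_ne_zero 0 0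
    rw [(hU01 one_ne_zero htC0 htA).deriv, (hV01 (lam := 1) one_ne_zero).deriv,
      Usys_eq, Vsys_eq] at e01a
    rw [(hU01 (by norm_num) htC0 htA).deriv, (hV01 (lam := -1) (by norm_num)).deriv,
      Usys_eq, Vsys_eq] at e01b
    rw [(hU10 one_ne_zero htD0 htB).deriv, (hV10 (lam := 1) one_ne_zero).deriv,
      Usys_eq, Vsys_eq] at e10a
    rw [(hU10 (by norm_num) htD0 htB).deriv, (hV10 (lam := -1) (by norm_num)).deriv,
      Usys_eq, Vsys_eq] at e10b
    rw [(hU00 hτ0' one_ne_zero hy').deriv, (hV00 (lam := 1) one_ne_zero).deriv,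
      Usys_eq, Vsys_eq] at e00
    simp only [Matrix.sub_apply, Matrix.mul_apply, Fin.sum_univ_two, Matrix.of_apply,
      Matrix.cons_val', Matrix.cons_val_zero, Matrix.cons_val_one, Matrix.head_cons,
      Matrix.empty_val', Matrix.cons_val_fin_one, Matrix.head_fin_const, id_eq]
      at e01a e01b e10a e10b e00
    have hIτ : Complex.I * τ0 ≠ 0 := mul_ne_zero Complex.I_ne_zero hτ0'
    have hτi : τ0 * τ0⁻¹ = 1 := mul_inv_cancel₀ hτ0'
    refine ⟨?_, ?_, ?_, ?_, ?_⟩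
    · have eY : Complex.I * τ0 * deriv A τ0 = Complex.I * τ0 * (4 * C τ0 * y τ0) := by
        linear_combination e01a + e01b
      exact (mul_left_cancel₀ hIτ eY) ▸ hA'
    · have eY : Complex.I * τ0 * deriv B τ0 = Complex.I * τ0 * (-(4 * D τ0 * y τ0)) := by
        linear_combination e10a + e10b
      exact (mul_left_cancel₀ hIτ eY) ▸ hB'
    · have eX : τ0 * (1 * C τ0 + τ0 * deriv C τ0)
          = τ0 * (2 * a * Complex.I * C τ0 - 2 * τ0 * A τ0) := by
        linear_combination (τ0 / 2) * e01b - (τ0 / 2) * e01a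
          + (2 * τ0 ^ 2 * A τ0) * Complex.I_sq + (2 * a * τ0 * C τ0 * Complex.I) * hτi
      exact (mul_left_cancel₀ hτ0' eX) ▸ htC0
    · have eX : τ0 * (1 * D τ0 + τ0 * deriv D τ0)
          = τ0 * (-(2 * a * Complex.I * D τ0) + 2 * τ0 * B τ0) := by
        linear_combination (τ0 / 2) * e10b - (τ0 / 2) * e10a
          - (2 * τ0 ^ 2 * B τ0) * Complex.I_sq - (2 * a * τ0 * D τ0 * Complex.I) * hτi
      exact (mul_left_cancel₀ hτ0' eX) ▸ htD0
    · have eY : Complex.I * τ0 * deriv y τ0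
          = Complex.I * τ0 * (2 * (A τ0 * D τ0 - B τ0 * C τ0)) := by
        linear_combination 2 * e00
      exact (mul_left_cancel₀ hIτ eY) ▸ hy'
  · -- reverse
    intro H τ0 hτ0S lam hlam i j
    obtain ⟨hA', hB', htC, htD, hy'⟩ := H τ0 hτ0S
    have hτ0' : τ0 ≠ 0 := hτ τ0 hτ0S
    have htA := (hasDerivAt_id τ0).mul hA'
    have htB := (hasDerivAt_id τ0).mul hB'
    fin_cases i <;> fin_cases j <;>
      simp only [Fin.mk_zero, Fin.mk_one, Fin.isValue]
    · rw [(hU00 hτ0' hlam hy').deriv, (hV00 hlam).deriv, Usys_eq, Vsys_eq]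
      simp only [Matrix.sub_apply, Matrix.mul_apply, Fin.sum_univ_two, Matrix.of_apply,
        Matrix.cons_val', Matrix.cons_val_zero, Matrix.cons_val_one, Matrix.head_cons,
        Matrix.empty_val', Matrix.cons_val_fin_one, Matrix.head_fin_const, id_eq]
      field_simp
      try ring_nf
      try field_simp
      try ring_nf
      try field_simp
      try ring
    · rw [(hU01 hlam htC htA).deriv, (hV01 hlam).deriv, Usys_eq, Vsys_eq]
      simp only [Matrix.sub_apply, Matrix.mul_apply, Fin.sum_univ_two, Matrix.of_apply,
        Matrix.cons_val', Matrix.cons_val_zero, Matrix.cons_val_one, Matrix.head_cons,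
        Matrix.empty_val', Matrix.cons_val_fin_one, Matrix.head_fin_const, id_eq]
      field_simp
      try ring_nf
      try field_simp
      try ring_nf
      try field_simp
      try ring
      linear_combination (8 * lam ^ 2 * τ0 * A τ0) * Complex.I_sq
    · rw [(hU10 hlam htD htB).deriv, (hV10 hlam).deriv, Usys_eq, Vsys_eq]
      simp only [Matrix.sub_apply, Matrix.mul_apply, Fin.sum_univ_two, Matrix.of_apply,
        Matrix.cons_val', Matrix.cons_val_zero, Matrix.cons_val_one, Matrix.head_cons,
        Matrix.empty_val', Matrix.cons_val_fin_one, Matrix.head_fin_const, id_eq]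
      field_simp
      try ring_nf
      try field_simp
      try ring_nf
      try field_simp
      try ring
      linear_combination (-(8 * lam ^ 2 * τ0 * B τ0)) * Complex.I_sq
    · rw [(hU11 hτ0' hlam hy').deriv, (hV11 hlam).deriv, Usys_eq, Vsys_eq]
      simp only [Matrix.sub_apply, Matrix.mul_apply, Fin.sum_univ_two, Matrix.of_apply,
        Matrix.cons_val', Matrix.cons_val_zero, Matrix.cons_val_one, Matrix.head_cons,
        Matrix.empty_val', Matrix.cons_val_fin_one, Matrix.head_fin_const, id_eq]
      field_simp
      try ring_nf
      try field_simp
      try ring_nf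
      try field_simp
      try ring
end

section
/- Let ε ∈ {1,−1}, c₁, c₂ ∈ ℂ, and fix a square root √c₁ of c₁. Define, for real τ > 0 (with τ^{√c₁} := exp(√c₁ · ln τ)), the function u(τ) := (ε c₁/(16τ)) − (ε c₁ (1 + c₂ τ^{√c₁})²)/(16τ (1 − c₂ τ^{√c₁})²). Then on any interval of τ > 0 where 1 − c₂ τ^{√c₁} ≠ 0 and u(τ) ≠ 0, the function u solves the degenerate third Painlevé equation with b = 0, i.e., u'' = (u')²/u − u'/τ − 8εu²/τ. -/
open Complex

/-- The explicit solution
`u(τ) = εc₁/(16τ) − εc₁(1 + c₂τ^{√c₁})²/(16τ(1 − c₂τ^{√c₁})²)`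
of the degenerate third Painlevé equation with `b = 0`, for real `τ > 0`,
where `τ^{√c₁} := exp(√c₁ · ln τ)` and `r` is a fixed square root of `c₁`. -/
noncomputable def uSol (ε c₁ c₂ r : ℂ) : ℝ → ℂ :=
  fun τ => ε * c₁ / (16 * (τ : ℂ))
    - ε * c₁ * (1 + c₂ * Complex.exp (r * (Real.log τ : ℂ))) ^ 2
        / (16 * (τ : ℂ) * (1 - c₂ * Complex.exp (r * (Real.log τ : ℂ))) ^ 2)

/-- `Wf c₂ r t = c₂ * t^r` for `t > 0`. -/
noncomputable def Wf (c₂ r : ℂ) : ℝ → ℂ :=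
  fun t => c₂ * Complex.exp (r * (Real.log t : ℂ))

/-- Simplified form of the solution: `a * W / (t * (1 - W)^2)` with `a = -εc₁/4`. -/
noncomputable def Ff (a c₂ r : ℂ) : ℝ → ℂ :=
  fun t => a * Wf c₂ r t / ((t : ℂ) * (1 - Wf c₂ r t) ^ 2)

/-- Explicit first derivative of `Ff`. -/
noncomputable def F1f (a c₂ r : ℂ) : ℝ → ℂ :=
  fun t => a * Wf c₂ r t * ((r - 1) + (r + 1) * Wf c₂ r t)
    / ((t : ℂ) ^ 2 * (1 - Wf c₂ r t) ^ 3)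

/-- Explicit second derivative of `Ff`. -/
noncomputable def F2f (a c₂ r : ℂ) : ℝ → ℂ :=
  fun t => a * Wf c₂ r t *
      ((r - 1) * (r - 2) + 4 * (r ^ 2 - 1) * Wf c₂ r t
        + (r + 1) * (r + 2) * Wf c₂ r t ^ 2)
    / ((t : ℂ) ^ 3 * (1 - Wf c₂ r t) ^ 4)


lemma hasDerivAt_sq {f : ℝ → ℂ} {f' : ℂ} {x : ℝ} (h : HasDerivAt f f' x) :
    HasDerivAt (fun t => f t ^ 2) (2 * f x * f') x := by
  have he : (fun t => f t ^ 2) = fun t => f t * f t := by funext t; ring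
  rw [he]
  refine (h.mul h).congr_deriv ?_
  ring

lemma hasDerivAt_cube {f : ℝ → ℂ} {f' : ℂ} {x : ℝ} (h : HasDerivAt f f' x) :
    HasDerivAt (fun t => f t ^ 3) (3 * f x ^ 2 * f') x := by
  have he : (fun t => f t ^ 3) = fun t => f t ^ 2 * f t := by funext t; ring
  rw [he]
  refine ((hasDerivAt_sq h).mul h).congr_deriv ?_
  ring

lemma hasDerivAt_Wf (c₂ r : ℂ) {σ : ℝ} (hσ : 0 < σ) :
    HasDerivAt (Wf c₂ r) (r * Wf c₂ r σ / σ) σ := by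
  have h := (((Real.hasDerivAt_log hσ.ne').ofReal_comp.const_mul r).cexp).const_mul c₂
  refine h.congr_deriv ?_
  have hσC : (σ : ℂ) ≠ 0 := Complex.ofReal_ne_zero.mpr hσ.ne'
  simp only [Wf, Complex.ofReal_inv]
  field_simp

lemma hasDerivAt_Ff (a c₂ r : ℂ) {σ : ℝ} (hσ : 0 < σ)
    (h1 : 1 - Wf c₂ r σ ≠ 0) :
    HasDerivAt (Ff a c₂ r) (F1f a c₂ r σ) σ := by
  have hσC : (σ : ℂ) ≠ 0 := Complex.ofReal_ne_zero.mpr hσ.ne'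
  have hW := hasDerivAt_Wf c₂ r hσ
  have hcoe : HasDerivAt (fun t : ℝ => (t : ℂ)) 1 σ := by
    simpa using (hasDerivAt_id σ).ofReal_comp
  have hnum : HasDerivAt (fun t : ℝ => a * Wf c₂ r t) (a * (r * Wf c₂ r σ / σ)) σ :=
    hW.const_mul a
  have hq : HasDerivAt (fun t : ℝ => (1 - Wf c₂ r t) ^ 2)
      (2 * (1 - Wf c₂ r σ) * (-(r * Wf c₂ r σ / (σ : ℂ)))) σ :=
    hasDerivAt_sq (hW.const_sub 1)
  have hD : HasDerivAt (fun t : ℝ => (t : ℂ) * (1 - Wf c₂ r t) ^ 2)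
      (1 * (1 - Wf c₂ r σ) ^ 2
        + (σ : ℂ) * (2 * (1 - Wf c₂ r σ) * (-(r * Wf c₂ r σ / (σ : ℂ))))) σ :=
    hcoe.mul hq
  have hDne : (σ : ℂ) * (1 - Wf c₂ r σ) ^ 2 ≠ 0 :=
    mul_ne_zero hσC (pow_ne_zero _ h1)
  have h := hnum.div hD hDne
  refine h.congr_deriv ?_
  simp only [F1f]
  field_simp
  ring

lemma hasDerivAt_F1f (a c₂ r : ℂ) {σ : ℝ} (hσ : 0 < σ)
    (h1 : 1 - Wf c₂ r σ ≠ 0) :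
    HasDerivAt (F1f a c₂ r) (F2f a c₂ r σ) σ := by
  have hσC : (σ : ℂ) ≠ 0 := Complex.ofReal_ne_zero.mpr hσ.ne'
  have hW := hasDerivAt_Wf c₂ r hσ
  have hcoe : HasDerivAt (fun t : ℝ => (t : ℂ)) 1 σ := by
    simpa using (hasDerivAt_id σ).ofReal_comp
  have hnum : HasDerivAt (fun t : ℝ => a * Wf c₂ r t * ((r - 1) + (r + 1) * Wf c₂ r t))
      (a * (r * Wf c₂ r σ / (σ : ℂ)) * ((r - 1) + (r + 1) * Wf c₂ r σ)
        + a * Wf c₂ r σ * ((r + 1) * (r * Wf c₂ r σ / (σ : ℂ)))) σ :=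
    (hW.const_mul a).mul ((hW.const_mul (r + 1)).const_add (r - 1))
  have hq3 : HasDerivAt (fun t : ℝ => (1 - Wf c₂ r t) ^ 3)
      (3 * (1 - Wf c₂ r σ) ^ 2 * (-(r * Wf c₂ r σ / (σ : ℂ)))) σ :=
    hasDerivAt_cube (hW.const_sub 1)
  have hp2 : HasDerivAt (fun t : ℝ => (t : ℂ) ^ 2)
      (2 * (σ : ℂ) * 1) σ := hasDerivAt_sq hcoe
  have hD : HasDerivAt (fun t : ℝ => (t : ℂ) ^ 2 * (1 - Wf c₂ r t) ^ 3)
      (2 * (σ : ℂ) * 1 * (1 - Wf c₂ r σ) ^ 3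
        + (σ : ℂ) ^ 2 * (3 * (1 - Wf c₂ r σ) ^ 2 * (-(r * Wf c₂ r σ / (σ : ℂ))))) σ :=
    hp2.mul hq3
  have hDne : (σ : ℂ) ^ 2 * (1 - Wf c₂ r σ) ^ 3 ≠ 0 :=
    mul_ne_zero (pow_ne_zero _ hσC) (pow_ne_zero _ h1)
  have h := hnum.div hD hDne
  refine h.congr_deriv ?_
  simp only [F2f]
  field_simp
  ring

lemma final_algebra (ε c₂ r : ℂ) (hε : ε = 1 ∨ ε = -1) (τ : ℝ)
    (hτC : (τ : ℂ) ≠ 0) (h1 : 1 - Wf c₂ r τ ≠ 0)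
    (hW0 : Wf c₂ r τ ≠ 0) (hr0 : r ≠ 0)
    (hF0 : Ff (-ε * r ^ 2 / 4) c₂ r τ ≠ 0) :
    F2f (-ε * r ^ 2 / 4) c₂ r τ =
      (F1f (-ε * r ^ 2 / 4) c₂ r τ) ^ 2 / Ff (-ε * r ^ 2 / 4) c₂ r τ
        - F1f (-ε * r ^ 2 / 4) c₂ r τ / (τ : ℂ)
        - 8 * ε * (Ff (-ε * r ^ 2 / 4) c₂ r τ) ^ 2 / (τ : ℂ) := by
  have key : (F1f (-ε * r ^ 2 / 4) c₂ r τ) ^ 2 / Ff (-ε * r ^ 2 / 4) c₂ r τ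
      = (-ε * r ^ 2 / 4) * Wf c₂ r τ * ((r - 1) + (r + 1) * Wf c₂ r τ) ^ 2
        / ((τ : ℂ) ^ 3 * (1 - Wf c₂ r τ) ^ 4) := by
    rw [div_eq_iff hF0]
    simp only [Ff, F1f, div_pow, div_mul_div_comm]
    rw [div_eq_div_iff
      (pow_ne_zero 2 (mul_ne_zero (pow_ne_zero 2 hτC) (pow_ne_zero 3 h1)))
      (mul_ne_zero (mul_ne_zero (pow_ne_zero 3 hτC) (pow_ne_zero 4 h1))
        (mul_ne_zero hτC (pow_ne_zero 2 h1)))]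
    ring
  have hDne : (τ : ℂ) ^ 3 * (1 - Wf c₂ r τ) ^ 4 ≠ 0 :=
    mul_ne_zero (pow_ne_zero _ hτC) (pow_ne_zero _ h1)
  have e2 : F1f (-ε * r ^ 2 / 4) c₂ r τ / (τ : ℂ)
      = (-ε * r ^ 2 / 4) * Wf c₂ r τ * ((r - 1) + (r + 1) * Wf c₂ r τ) * (1 - Wf c₂ r τ)
        / ((τ : ℂ) ^ 3 * (1 - Wf c₂ r τ) ^ 4) := by
    simp only [F1f]
    rw [div_div, div_eq_div_iff
      (mul_ne_zero (mul_ne_zero (pow_ne_zero _ hτC) (pow_ne_zero _ h1)) hτC) hDne]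
    ring
  have e3 : 8 * ε * (Ff (-ε * r ^ 2 / 4) c₂ r τ) ^ 2 / (τ : ℂ)
      = 8 * ε * ((-ε * r ^ 2 / 4) * Wf c₂ r τ) ^ 2 / ((τ : ℂ) ^ 3 * (1 - Wf c₂ r τ) ^ 4) := by
    simp only [Ff, div_pow]
    rw [← mul_div_assoc, div_div, div_eq_div_iff
      (mul_ne_zero (pow_ne_zero _ (mul_ne_zero hτC (pow_ne_zero _ h1))) hτC) hDne]
    ring
  rw [key, e2, e3, div_sub_div_same, div_sub_div_same]
  simp only [F2f]
  rcases hε with h' | h' <;> subst h' <;>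
    · congr 1
      ring

/-- At every `τ > 0` where `1 − c₂τ^{√c₁} ≠ 0` and `u(τ) ≠ 0`, the function
`uSol` solves the degenerate third Painlevé equation with `b = 0`:
`u'' = (u')²/u − u'/τ − 8εu²/τ`. -/
theorem dp3_b_zero_explicit_solution
    (ε c₁ c₂ r : ℂ) (hε : ε = 1 ∨ ε = -1) (hr : r ^ 2 = c₁)
    (τ : ℝ) (hτ : 0 < τ)
    (h1 : 1 - c₂ * Complex.exp (r * (Real.log τ : ℂ)) ≠ 0)
    (h2 : uSol ε c₁ c₂ r τ ≠ 0) :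
    deriv (deriv (uSol ε c₁ c₂ r)) τ =
      (deriv (uSol ε c₁ c₂ r) τ) ^ 2 / uSol ε c₁ c₂ r τ
        - deriv (uSol ε c₁ c₂ r) τ / (τ : ℂ)
        - 8 * ε * (uSol ε c₁ c₂ r τ) ^ 2 / (τ : ℂ) := by
  subst hr
  have h1' : 1 - Wf c₂ r τ ≠ 0 := h1
  have hτC : (τ : ℂ) ≠ 0 := Complex.ofReal_ne_zero.mpr hτ.ne'
  -- the two conditions hold in a neighborhood of τ
  have hev : ∀ᶠ σ in nhds τ, 0 < σ ∧ 1 - Wf c₂ r σ ≠ 0 := by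
    have hpos : ∀ᶠ σ in nhds τ, 0 < σ := eventually_gt_nhds hτ
    have hcont : ContinuousAt (fun σ => 1 - Wf c₂ r σ) τ :=
      (continuousAt_const.sub ((hasDerivAt_Wf c₂ r hτ).continuousAt))
    exact hpos.and (hcont.eventually_ne h1')
  -- uSol agrees with Ff near τ
  have heq : uSol ε (r ^ 2) c₂ r =ᶠ[nhds τ] Ff (-ε * r ^ 2 / 4) c₂ r := by
    filter_upwards [hev] with σ ⟨hσ, hσ1⟩
    have hσC : (σ : ℂ) ≠ 0 := Complex.ofReal_ne_zero.mpr hσ.ne'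
    simp only [uSol, Ff, Wf] at hσ1 ⊢
    field_simp
    ring
  have huτ : uSol ε (r ^ 2) c₂ r τ = Ff (-ε * r ^ 2 / 4) c₂ r τ := heq.self_of_nhds
  -- first derivative
  have hd1 : deriv (uSol ε (r ^ 2) c₂ r) τ = F1f (-ε * r ^ 2 / 4) c₂ r τ :=
    heq.deriv_eq.trans (hasDerivAt_Ff _ c₂ r hτ h1').deriv
  -- second derivative
  have hder_ev : deriv (uSol ε (r ^ 2) c₂ r) =ᶠ[nhds τ] F1f (-ε * r ^ 2 / 4) c₂ r := by
    refine heq.deriv.trans ?_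
    filter_upwards [hev] with σ ⟨hσ, hσ1⟩
    exact (hasDerivAt_Ff _ c₂ r hσ hσ1).deriv
  have hd2 : deriv (deriv (uSol ε (r ^ 2) c₂ r)) τ = F2f (-ε * r ^ 2 / 4) c₂ r τ :=
    hder_ev.deriv_eq.trans (hasDerivAt_F1f _ c₂ r hτ h1').deriv
  rw [hd1, hd2, huτ]
  -- nonvanishing facts from h2
  rw [huτ] at h2
  have hnum : -ε * r ^ 2 / 4 * Wf c₂ r τ ≠ 0 := by
    intro h
    apply h2
    simp only [Ff, h, zero_div]
  have ha0 : -ε * r ^ 2 / 4 ≠ 0 := fun h => hnum (by rw [h, zero_mul])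
  have hW0 : Wf c₂ r τ ≠ 0 := fun h => hnum (by rw [h, mul_zero])
  have hr0 : r ≠ 0 := by
    intro h
    apply ha0
    rw [h]
    ring
  exact final_algebra ε c₂ r hε τ hτC h1' hW0 hr0 h2
end
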